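/- (Kato-type inequality for degenerate Hessian equations, algebraic core, Case 2) Let 1 ≤ k < n and let λ' = (λ₁,...,λ_{n-1}) ∈ Γ̄_{k-1} with S_{k-1}(λ') > 0. Then (k(n-k-1)/(n-k))·S_k(λ')²/S_{k-1}(λ') - (k+1)S_{k+1}(λ') ≥ 0. -/

import Mathlib

open Finset Polynomial

-- real-number core: Cauchy-Schwarz step
lemma real_core (d : ℕ) (c : ℝ) (p : Fin d → ℝ) :
    (d : ℝ) * ((c * c) * ∑ i, ∑ j ∈ univ.erase i, p i * p j) ≤
    ((d : ℝ) - 1) * (c * ∑ i, p i) ^ 2 := by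
  have hcs : (∑ i, p i) ^ 2 ≤ (d : ℝ) * ∑ i, p i ^ 2 := by
    have := sq_sum_le_card_mul_sum_sq (s := (univ : Finset (Fin d))) (f := p)
    simpa using this
  have hexp : ∑ i, ∑ j ∈ univ.erase i, p i * p j = (∑ i, p i) ^ 2 - ∑ i, p i ^ 2 := by
    have : ∀ i : Fin d, ∑ j ∈ univ.erase i, p i * p j = p i * (∑ j, p j) - p i ^ 2 := by
      intro i
      rw [← Finset.mul_sum, ← Finset.add_sum_erase _ p (mem_univ i)]
      ring
    rw [Finset.sum_congr rfl fun i _ => this i, Finset.sum_sub_distrib, ← Finset.sum_mul, sq]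
  rw [hexp]
  nlinarith [sq_nonneg c, sq_nonneg (∑ i, p i), mul_nonneg (sq_nonneg c) (sub_nonneg.mpr hcs)]

lemma derivative_finprod {ι : Type*} [DecidableEq ι] (s : Finset ι) (f : ι → ℝ[X]) :
    derivative (∏ i ∈ s, f i) = ∑ i ∈ s, (∏ j ∈ s.erase i, f j) * derivative (f i) := by
  induction s using Finset.induction_on with
  | empty => simp
  | @insert a s ha ih =>
    rw [Finset.sum_insert ha, Finset.erase_insert ha, Finset.prod_insert ha, derivative_mul, ih,
      Finset.mul_sum]
    have key : ∀ i ∈ s, (∏ j ∈ (insert a s).erase i, f j) * derivative (f i)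
        = f a * ((∏ j ∈ s.erase i, f j) * derivative (f i)) := by
      intro i hi
      have hia : i ≠ a := fun h => ha (h ▸ hi)
      rw [Finset.erase_insert_of_ne hia.symm,
        Finset.prod_insert (fun h => ha (Finset.mem_of_mem_erase h)), mul_assoc]
    rw [Finset.sum_congr rfl key]
    ring

lemma poly_core (d : ℕ) (c x : ℝ) (r : Fin d → ℝ) :
    (d : ℝ) * (eval x (C c * ∏ i, (X - C (r i))) *
        eval x (derivative (derivative (C c * ∏ i, (X - C (r i)))))) ≤
      ((d : ℝ) - 1) * eval x (derivative (C c * ∏ i, (X - C (r i)))) ^ 2 := by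
  have hd1 : derivative (C c * ∏ i, (X - C (r i))) =
      C c * ∑ i, ∏ j ∈ univ.erase i, (X - C (r j)) := by
    rw [derivative_C_mul, derivative_finprod]
    simp [derivative_X_sub_C]
  have hd2 : derivative (derivative (C c * ∏ i, (X - C (r i)))) =
      C c * ∑ i, ∑ j ∈ univ.erase i, ∏ l ∈ (univ.erase i).erase j, (X - C (r l)) := by
    rw [hd1, derivative_C_mul]
    simp only [derivative_sum]
    congr 1
    refine Finset.sum_congr rfl fun i _ => ?_
    rw [derivative_finprod]
    simp [derivative_X_sub_C]
  rw [hd2, hd1]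
  simp only [eval_mul, eval_C, eval_finset_sum, eval_prod, eval_sub, eval_X]
  have hPQ : (∏ l, (x - r l)) * (∑ i, ∑ j ∈ univ.erase i,
        ∏ l ∈ (univ.erase i).erase j, (x - r l)) =
      ∑ i, ∑ j ∈ univ.erase i,
        (∏ l ∈ univ.erase i, (x - r l)) * ∏ l ∈ univ.erase j, (x - r l) := by
    rw [Finset.mul_sum]
    refine Finset.sum_congr rfl fun i _ => ?_
    rw [Finset.mul_sum]
    refine Finset.sum_congr rfl fun j hj => ?_
    have hji : j ≠ i := Finset.ne_of_mem_erase hj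
    have h1 : ∏ l ∈ univ.erase i, (x - r l) =
        (x - r j) * ∏ l ∈ (univ.erase i).erase j, (x - r l) :=
      (Finset.mul_prod_erase _ _ (by simp [hji])).symm
    have h2 : (∏ l, (x - r l)) = (x - r i) * ∏ l ∈ univ.erase i, (x - r l) :=
      (Finset.mul_prod_erase _ _ (mem_univ i)).symm
    have h3 : ∏ l ∈ univ.erase j, (x - r l) =
        (x - r i) * ∏ l ∈ (univ.erase i).erase j, (x - r l) := by
      rw [Finset.erase_right_comm]
      exact (Finset.mul_prod_erase _ _ (by simp [hji.symm])).symm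
    rw [h2, h1, h3]; ring
  calc (d : ℝ) * ((c * ∏ l, (x - r l)) *
        (c * ∑ i, ∑ j ∈ univ.erase i, ∏ l ∈ (univ.erase i).erase j, (x - r l)))
      = (d : ℝ) * ((c * c) * ((∏ l, (x - r l)) *
        (∑ i, ∑ j ∈ univ.erase i, ∏ l ∈ (univ.erase i).erase j, (x - r l)))) := by ring
    _ = (d : ℝ) * ((c * c) * ∑ i, ∑ j ∈ univ.erase i,
        (∏ l ∈ univ.erase i, (x - r l)) * ∏ l ∈ univ.erase j, (x - r l)) := by rw [hPQ]
    _ ≤ ((d : ℝ) - 1) * (c * ∑ i, ∏ l ∈ univ.erase i, (x - r l)) ^ 2 :=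
        real_core d c fun i => ∏ l ∈ univ.erase i, (x - r l)

lemma rr_ineq (g : ℝ[X]) (hg : Multiset.card g.roots = g.natDegree) (x : ℝ) :
    (g.natDegree : ℝ) * (eval x g * eval x (derivative (derivative g))) ≤
      ((g.natDegree : ℝ) - 1) * eval x (derivative g) ^ 2 := by
  by_cases h0 : g = 0
  · simp [h0]
  have hsplit : Splits g := splits_iff_card_roots.mpr hg
  have heq := hsplit.eq_prod_roots
  set l := g.roots.toList with hl
  have hroots : g.roots = ↑l := (g.roots.coe_toList).symm
  have hlen : l.length = g.natDegree := by rw [← hg, hl, Multiset.length_toList]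
  have hprod : (g.roots.map fun a => X - C a).prod
      = ∏ i : Fin l.length, (X - C (l[(i : ℕ)])) := by
    conv_lhs => rw [hroots]
    rw [Multiset.map_coe, Multiset.prod_coe]
    exact (Fin.prod_univ_fun_getElem l fun a => X - C a).symm
  have hG : g = C g.leadingCoeff * ∏ i : Fin l.length, (X - C (l[(i : ℕ)])) := by
    conv_lhs => rw [heq, hprod]
  have := poly_core l.length g.leadingCoeff x (fun i => l[(i : ℕ)])
  rw [← hG] at this
  rwa [hlen] at this

lemma rr_derivative (g : ℝ[X]) (hg : Multiset.card g.roots = g.natDegree) :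
    Multiset.card (derivative g).roots = (derivative g).natDegree := by
  by_cases h0 : derivative g = 0
  · simp [h0]
  have hnd : g.natDegree ≠ 0 := fun h => h0 (by rw [eq_C_of_natDegree_eq_zero h, derivative_C])
  have h1 : Multiset.card (derivative g).roots ≤ (derivative g).natDegree := card_roots' _
  have h2 : (derivative g).natDegree ≤ g.natDegree - 1 := natDegree_derivative_le g
  have h3 : Multiset.card g.roots ≤ Multiset.card (derivative g).roots + 1 :=
    card_roots_le_derivative g
  omega

lemma rr_iterate (g : ℝ[X]) (hg : Multiset.card g.roots = g.natDegree) (j : ℕ) :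
    Multiset.card (derivative^[j] g).roots = (derivative^[j] g).natDegree := by
  induction j with
  | zero => exact hg
  | succ j ih => rw [Function.iterate_succ_apply']; exact rr_derivative _ ih

noncomputable def esymm' {m : ℕ} (k : ℕ) (lam : Fin m → ℝ) : ℝ :=
  ∑ s ∈ Finset.univ.powersetCard k, ∏ i ∈ s, lam i

lemma coeff_F {m : ℕ} (lam : Fin m → ℝ) (j : ℕ) :
    (∏ i, (C (lam i) * X + 1)).coeff j = esymm' j lam := by
  have hexp : (∏ i, (C (lam i) * X + 1)) =
      ∑ t ∈ (univ : Finset (Fin m)).powerset, C (∏ i ∈ t, lam i) * X ^ t.card := by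
    rw [Finset.prod_add]
    refine Finset.sum_congr rfl fun t _ => ?_
    rw [Finset.prod_const_one, mul_one, Finset.prod_mul_distrib, Finset.prod_const, map_prod]
  rw [hexp, finset_sum_coeff]
  simp only [coeff_C_mul, coeff_X_pow]
  rw [esymm', Finset.powersetCard_eq_filter, Finset.sum_filter]
  refine Finset.sum_congr rfl fun t _ => ?_
  by_cases h : #t = j
  · simp [h]
  · rw [if_neg h, if_neg (fun hh => h hh.symm), mul_zero]

lemma factor_card (a : ℝ) :
    Multiset.card (C a * X + 1 : ℝ[X]).roots = (C a * X + 1 : ℝ[X]).natDegree := by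
  by_cases ha : a = 0
  · simp [ha]
  · have h : (C a * X + 1 : ℝ[X]) = C a * (X - C (-a⁻¹)) := by
      rw [mul_sub, ← C_mul]
      congr 1
      rw [← C_1]
      congr 1
      field_simp
      simp
    rw [h, roots_C_mul _ ha, roots_X_sub_C, natDegree_C_mul ha, natDegree_X_sub_C]
    simp

lemma rr_F {m : ℕ} (lam : Fin m → ℝ) :
    Multiset.card (∏ i, (C (lam i) * X + 1)).roots
      = (∏ i, (C (lam i) * X + 1)).natDegree := by
  have hne : ∀ i ∈ (univ : Finset (Fin m)), C (lam i) * X + 1 ≠ (0 : ℝ[X]) := by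
    intro i _ h
    have := congrArg (eval 0) h
    simp at this
  have hprodne : (∏ i, (C (lam i) * X + 1)) ≠ 0 := Finset.prod_ne_zero_iff.mpr hne
  rw [Polynomial.roots_prod _ _ hprodne, natDegree_prod _ _ hne, Multiset.card_bind]
  simp only [Function.comp]
  have : ∀ i : Fin m, Multiset.card (C (lam i) * X + 1 : ℝ[X]).roots
      = (C (lam i) * X + 1 : ℝ[X]).natDegree := fun i => factor_card _
  simp only [this]
  rfl

lemma natDegree_F_le {m : ℕ} (lam : Fin m → ℝ) :
    (∏ i, (C (lam i) * X + 1)).natDegree ≤ m := by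
  refine le_trans (natDegree_prod_le _ _) ?_
  calc ∑ i : Fin m, (C (lam i) * X + 1).natDegree ≤ ∑ _i : Fin m, 1 := by
        refine Finset.sum_le_sum fun i _ => ?_
        refine le_trans (natDegree_add_le _ _) ?_
        simp only [natDegree_one, Nat.max_le, Nat.zero_le, and_true]
        exact le_trans (natDegree_C_mul_le _ _) (by simp)
    _ = m := by simp

lemma newton {m : ℕ} (lam : Fin m → ℝ) (k' : ℕ) (hk : k' + 1 ≤ m) :
    ((k' : ℝ) + 2) * ((m : ℝ) - k') * (esymm' k' lam * esymm' (k' + 2) lam)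
      ≤ ((k' : ℝ) + 1) * ((m : ℝ) - k' - 1) * esymm' (k' + 1) lam ^ 2 := by
  set F : ℝ[X] := ∏ i, (C (lam i) * X + 1) with hF
  set G : ℝ[X] := derivative^[k'] F with hG
  set S₀ := esymm' k' lam
  set S₁ := esymm' (k' + 1) lam
  set S₂ := esymm' (k' + 2) lam
  have hdle : G.natDegree ≤ m - k' :=
    le_trans (natDegree_iterate_derivative F k') (Nat.sub_le_sub_right (natDegree_F_le lam) k')
  have hev0 : eval 0 G = (k'.factorial : ℝ) * S₀ := by
    rw [← coeff_zero_eq_eval_zero, hG, coeff_iterate_derivative, coeff_F]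
    simp [Nat.descFactorial_self, nsmul_eq_mul]
    exact Or.inl rfl
  have hev1 : eval 0 (derivative G) = ((k' + 1).factorial : ℝ) * S₁ := by
    rw [← coeff_zero_eq_eval_zero, hG, ← Function.iterate_succ_apply' derivative k' F,
      coeff_iterate_derivative]
    simp only [zero_add, Nat.descFactorial_self, nsmul_eq_mul]
    rw [coeff_F]
  have hev2 : eval 0 (derivative (derivative G)) = ((k' + 2).factorial : ℝ) * S₂ := by
    rw [← coeff_zero_eq_eval_zero, hG, ← Function.iterate_succ_apply' derivative k' F,
      ← Function.iterate_succ_apply' derivative (k' + 1) F,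
      coeff_iterate_derivative]
    simp only [zero_add, Nat.descFactorial_self, nsmul_eq_mul]
    rw [coeff_F]
  have hmk : (0 : ℝ) ≤ (m : ℝ) - k' - 1 := by
    have : ((k' : ℝ) + 1) ≤ m := by exact_mod_cast hk
    linarith
  by_cases hd2 : 2 ≤ G.natDegree
  · have hrr : Multiset.card G.roots = G.natDegree := rr_iterate F (rr_F lam) k'
    have hmain := rr_ineq G hrr 0
    rw [hev0, hev1, hev2] at hmain
    set c : ℝ := (k'.factorial : ℝ) * ((k' + 1).factorial : ℝ) with hc
    have hcpos : 0 < c := by positivity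
    have e1 : (k'.factorial : ℝ) * ((k' + 2).factorial : ℝ) = c * ((k' : ℝ) + 2) := by
      rw [hc, show k' + 2 = (k' + 1) + 1 from rfl, Nat.factorial_succ (k' + 1)]
      push_cast
      ring
    have e2 : (((k' + 1).factorial : ℝ)) ^ 2 = c * ((k' : ℝ) + 1) := by
      rw [hc, Nat.factorial_succ k']
      push_cast
      ring
    set d : ℝ := (G.natDegree : ℝ) with hd
    have hkeyc : d * (((k' : ℝ) + 2) * (S₀ * S₂)) * c ≤ (d - 1) * (((k' : ℝ) + 1) * S₁ ^ 2) * c := by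
      calc d * (((k' : ℝ) + 2) * (S₀ * S₂)) * c
          = d * ((k'.factorial : ℝ) * S₀ * ((((k' + 2).factorial : ℝ)) * S₂)) := by
            linear_combination (-(d * S₀ * S₂)) * e1
        _ ≤ (d - 1) * (((k' + 1).factorial : ℝ) * S₁) ^ 2 := hmain
        _ = (d - 1) * (((k' : ℝ) + 1) * S₁ ^ 2) * c := by
            linear_combination (d - 1) * S₁ ^ 2 * e2
    have hkey : d * (((k' : ℝ) + 2) * (S₀ * S₂)) ≤ (d - 1) * (((k' : ℝ) + 1) * S₁ ^ 2) :=
      le_of_mul_le_mul_right hkeyc hcpos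
    have hd2' : (2 : ℝ) ≤ d := by rw [hd]; exact_mod_cast hd2
    have hdle' : d ≤ (m : ℝ) - k' := by
      rw [hd]
      have h1 : ((G.natDegree : ℝ)) ≤ ((m - k' : ℕ) : ℝ) := by exact_mod_cast hdle
      have h2 : ((m - k' : ℕ) : ℝ) = (m : ℝ) - k' := by
        rw [Nat.cast_sub (by omega)]
      linarith
    have h1 := mul_le_mul_of_nonneg_left hkey (show (0 : ℝ) ≤ (m : ℝ) - k' by linarith)
    have h2 : 0 ≤ ((k' : ℝ) + 1) * (((m : ℝ) - k') - d) * S₁ ^ 2 :=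
      mul_nonneg (mul_nonneg (by positivity) (by linarith)) (sq_nonneg _)
    nlinarith [h1, h2, hd2']
  · have hder0 : derivative (derivative G) = 0 := by
      have h1 : (derivative G).natDegree = 0 := by
        have := natDegree_derivative_le G
        omega
      rw [eq_C_of_natDegree_eq_zero h1, derivative_C]
    have hS2 : S₂ = 0 := by
      have h2 := hev2
      rw [hder0] at h2
      simp only [eval_zero] at h2
      have hfac : ((k' + 2).factorial : ℝ) ≠ 0 := by positivity
      have := h2.symm
      rcases mul_eq_zero.mp this with h | h
      · exact absurd h hfac
      · exact h
    rw [hS2]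
    have : ((k' : ℝ) + 2) * ((m : ℝ) - k') * (S₀ * 0) = 0 := by ring
    rw [this]
    exact mul_nonneg (mul_nonneg (by positivity) hmk) (sq_nonneg _)

noncomputable def esymm {m : ℕ} (k : ℕ) (lam : Fin m → ℝ) : ℝ :=
  ∑ s ∈ Finset.univ.powersetCard k, ∏ i ∈ s, lam i

noncomputable def esymmZ {m : ℕ} (k : ℤ) (lam : Fin m → ℝ) : ℝ :=
  if k < 0 then 0 else esymm k.toNat lam

noncomputable def esymmDel {m : ℕ} (k : ℕ) (lam : Fin m → ℝ) (a : Fin m) : ℝ :=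
  ∑ s ∈ (Finset.univ.erase a).powersetCard k, ∏ i ∈ s, lam i

noncomputable def esymmDelZ {m : ℕ} (k : ℤ) (lam : Fin m → ℝ) (a : Fin m) : ℝ :=
  if k < 0 then 0 else esymmDel k.toNat lam a

noncomputable def esymmDel2 {m : ℕ} (k : ℕ) (lam : Fin m → ℝ) (a b : Fin m) : ℝ :=
  ∑ s ∈ ((Finset.univ.erase a).erase b).powersetCard k, ∏ i ∈ s, lam i

noncomputable def esymmDel2Z {m : ℕ} (k : ℤ) (lam : Fin m → ℝ) (a b : Fin m) : ℝ :=
  if k < 0 then 0 else esymmDel2 k.toNat lam a b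

noncomputable def Smat {n : ℕ} (k : ℕ) (A : Matrix (Fin n) (Fin n) ℝ) : ℝ :=
  ∑ s ∈ Finset.univ.powersetCard k,
    (A.submatrix (Subtype.val : {i : Fin n // i ∈ s} → Fin n)
      (Subtype.val : {i : Fin n // i ∈ s} → Fin n)).det

noncomputable def SkDeriv {n : ℕ} (k : ℕ) (A : Matrix (Fin n) (Fin n) ℝ) (i j : Fin n) : ℝ :=
  deriv (fun t : ℝ => Smat k (A + t • Matrix.single i j 1)) 0

noncomputable def hess {n : ℕ} (f : EuclideanSpace ℝ (Fin n) → ℝ)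
    (x : EuclideanSpace ℝ (Fin n)) : Matrix (Fin n) (Fin n) ℝ :=
  fun i j => iteratedFDeriv ℝ 2 f x ![EuclideanSpace.single i 1, EuclideanSpace.single j 1]

noncomputable def eigMultiset {n : ℕ} (A : Matrix (Fin n) (Fin n) ℝ) : Multiset ℝ :=
  A.charpoly.roots

lemma esymm_eq_esymm' {m : ℕ} (k : ℕ) (lam : Fin m → ℝ) : esymm k lam = esymm' k lam := rfl

theorem stmt7 (n k : ℕ) (hk : 1 ≤ k) (hkn : k < n) (lam : Fin (n - 1) → ℝ)
    (hG : ∀ m : ℕ, 1 ≤ m → m ≤ k - 1 → 0 ≤ esymm m lam)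
    (hpos : 0 < esymm (k - 1) lam) :
    0 ≤ (k : ℝ) * ((n : ℝ) - k - 1) / ((n : ℝ) - k) * (esymm k lam) ^ 2 / esymm (k - 1) lam
        - ((k : ℝ) + 1) * esymm (k + 1) lam := by
  obtain ⟨k', rfl⟩ : ∃ k', k = k' + 1 := ⟨k - 1, by omega⟩
  have hm : k' + 1 ≤ n - 1 := by omega
  have hnewton := newton lam k' hm
  simp only [← esymm_eq_esymm'] at hnewton
  have hmcast : ((n - 1 : ℕ) : ℝ) = (n : ℝ) - 1 := by
    rw [Nat.cast_sub (by omega)]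
    norm_num
  rw [hmcast] at hnewton
  simp only [Nat.add_sub_cancel] at hpos ⊢
  have hS0 : 0 < esymm k' lam := hpos
  have hkcast : ((k' : ℝ) + 1) < (n : ℝ) := by exact_mod_cast hkn
  rw [sub_nonneg, le_div_iff₀ hS0, div_mul_eq_mul_div]
  push_cast
  rw [le_div_iff₀ (by linarith : (0 : ℝ) < (n : ℝ) - ((k' : ℝ) + 1))]
  nlinarith [hnewton]
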